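/- Consider the Lie algebra L_{9,43}^{p,q} (q ≠ 0, |p| ≤ 1) with nonzero brackets [X_1,X_2]=2X_2, [X_1,X_3]=−2X_3, [X_2,X_3]=X_1, [X_1,X_4]=X_4, [X_1,X_5]=−X_5, [X_1,X_6]=X_6, [X_1,X_7]=−X_7, [X_2,X_5]=X_4, [X_2,X_7]=X_6, [X_3,X_4]=X_5, [X_3,X_6]=X_7, [X_4,X_9]=X_4, [X_5,X_9]=X_5, [X_6,X_9]=pX_6, [X_7,X_9]=pX_7, [X_8,X_9]=qX_8. The functions J_1 = x_4 x_7 − x_5 x_6 and J_2 = x_8 satisfy: \hat{X}_i(J_1) = 0 for i = 1,...,8, \hat{X}_i(J_2) = 0 for i = 1,...,8, \hat{X}_9(J_1) = −(1+p)J_1, and \hat{X}_9(J_2) = −q J_2. Consequently, on the region x_8 > 0 and J_1 > 0, the function I_1 = J_1^q / J_2^{1+p} satisfies \hat{X}_i(I_1) = 0 for all i = 1,...,9. -/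
import Mathlib


open Finset

noncomputable def Xhat (C : Fin 9 → Fin 9 → Fin 9 → ℝ) (i : Fin 9)
    (F : (Fin 9 → ℝ) → ℝ) : (Fin 9 → ℝ) → ℝ :=
  fun x => ∑ j : Fin 9, (∑ k : Fin 9, C i j k * x k) * fderiv ℝ F x (Pi.single j 1)

noncomputable def Lhalf (p q : ℝ) : Fin 9 → Fin 9 → Fin 9 → ℝ := fun i j k =>
  if (i, j, k) = ((0 : Fin 9), (1 : Fin 9), (1 : Fin 9)) then (2 : ℝ) else
  if (i, j, k) = ((0 : Fin 9), (2 : Fin 9), (2 : Fin 9)) then (-2 : ℝ) else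
  if (i, j, k) = ((1 : Fin 9), (2 : Fin 9), (0 : Fin 9)) then (1 : ℝ) else
  if (i, j, k) = ((0 : Fin 9), (3 : Fin 9), (3 : Fin 9)) then (1 : ℝ) else
  if (i, j, k) = ((0 : Fin 9), (4 : Fin 9), (4 : Fin 9)) then (-1 : ℝ) else
  if (i, j, k) = ((0 : Fin 9), (5 : Fin 9), (5 : Fin 9)) then (1 : ℝ) else
  if (i, j, k) = ((0 : Fin 9), (6 : Fin 9), (6 : Fin 9)) then (-1 : ℝ) else
  if (i, j, k) = ((1 : Fin 9), (4 : Fin 9), (3 : Fin 9)) then (1 : ℝ) else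
  if (i, j, k) = ((1 : Fin 9), (6 : Fin 9), (5 : Fin 9)) then (1 : ℝ) else
  if (i, j, k) = ((2 : Fin 9), (3 : Fin 9), (4 : Fin 9)) then (1 : ℝ) else
  if (i, j, k) = ((2 : Fin 9), (5 : Fin 9), (6 : Fin 9)) then (1 : ℝ) else
  if (i, j, k) = ((3 : Fin 9), (8 : Fin 9), (3 : Fin 9)) then (1 : ℝ) else
  if (i, j, k) = ((4 : Fin 9), (8 : Fin 9), (4 : Fin 9)) then (1 : ℝ) else
  if (i, j, k) = ((5 : Fin 9), (8 : Fin 9), (5 : Fin 9)) then (p : ℝ) else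
  if (i, j, k) = ((6 : Fin 9), (8 : Fin 9), (6 : Fin 9)) then (p : ℝ) else
  if (i, j, k) = ((7 : Fin 9), (8 : Fin 9), (7 : Fin 9)) then (q : ℝ) else
  0

noncomputable def C (p q : ℝ) (i j k : Fin 9) : ℝ := Lhalf p q i j k - Lhalf p q j i k

noncomputable def J₁ : (Fin 9 → ℝ) → ℝ := fun x => x 3 * x 6 - x 4 * x 5
noncomputable def J₂ : (Fin 9 → ℝ) → ℝ := fun x => x 7

noncomputable def I₁ (p q : ℝ) : (Fin 9 → ℝ) → ℝ :=
  fun x => Real.rpow (J₁ x) q / Real.rpow (J₂ x) (1 + p)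


section Aux

lemma sum9 (f : Fin 9 → ℝ) : ∑ i, f i = f 0 + f 1 + f 2 + f 3 + f 4 + f 5 + f 6 + f 7 + f 8 := by
  rw [Fin.sum_univ_castSucc, Fin.sum_univ_eight]; rfl

noncomputable def D1 (x : Fin 9 → ℝ) : (Fin 9 → ℝ) →L[ℝ] ℝ :=
  (x 3 • ContinuousLinearMap.proj (6 : Fin 9) + x 6 • ContinuousLinearMap.proj 3)
    - (x 4 • ContinuousLinearMap.proj 5 + x 5 • ContinuousLinearMap.proj 4)

lemma hasJ1 (x : Fin 9 → ℝ) : HasFDerivAt J₁ (D1 x) x := by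
  have h3 := (ContinuousLinearMap.proj (R := ℝ) (φ := fun _ : Fin 9 => ℝ) 3).hasFDerivAt (x := x)
  have h4 := (ContinuousLinearMap.proj (R := ℝ) (φ := fun _ : Fin 9 => ℝ) 4).hasFDerivAt (x := x)
  have h5 := (ContinuousLinearMap.proj (R := ℝ) (φ := fun _ : Fin 9 => ℝ) 5).hasFDerivAt (x := x)
  have h6 := (ContinuousLinearMap.proj (R := ℝ) (φ := fun _ : Fin 9 => ℝ) 6).hasFDerivAt (x := x)
  exact (h3.mul h6).sub (h4.mul h5)

lemma hasJ2 (x : Fin 9 → ℝ) : HasFDerivAt J₂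
    (ContinuousLinearMap.proj (7 : Fin 9) : (Fin 9 → ℝ) →L[ℝ] ℝ) x :=
  (ContinuousLinearMap.proj (R := ℝ) (φ := fun _ : Fin 9 => ℝ) 7).hasFDerivAt

lemma dJ1 (x v : Fin 9 → ℝ) :
    fderiv ℝ J₁ x v = v 3 * x 6 + x 3 * v 6 - (v 4 * x 5 + x 4 * v 5) := by
  rw [(hasJ1 x).fderiv]
  simp [D1, ContinuousLinearMap.proj_apply]
  ring

lemma dJ2 (x v : Fin 9 → ℝ) : fderiv ℝ J₂ x v = v 7 := by
  rw [(hasJ2 x).fderiv]; rfl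

lemma dI1 (p q : ℝ) (x : Fin 9 → ℝ) (h7 : 0 < x 7) (h1 : 0 < J₁ x) (v : Fin 9 → ℝ) :
    fderiv ℝ (I₁ p q) x v =
      (x 7 ^ (-(1 + p)) * (q * J₁ x ^ (q - 1))) * fderiv ℝ J₁ x v
        + (J₁ x ^ q * (-(1 + p) * x 7 ^ (-(1 + p) - 1))) * fderiv ℝ J₂ x v := by
  have hg : HasFDerivAt (fun y => J₁ y ^ q * (y 7 : ℝ) ^ (-(1 + p)))
      ((J₁ x ^ q) • ((-(1 + p) * x 7 ^ (-(1 + p) - 1)) •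
          (ContinuousLinearMap.proj (7 : Fin 9) : (Fin 9 → ℝ) →L[ℝ] ℝ))
        + ((x 7 : ℝ) ^ (-(1 + p))) • ((q * J₁ x ^ (q - 1)) • D1 x)) x := by
    have hA : HasFDerivAt (fun y => J₁ y ^ q) ((q * J₁ x ^ (q - 1)) • D1 x) x :=
      (hasJ1 x).rpow_const (Or.inl h1.ne')
    have hB : HasFDerivAt (fun y : Fin 9 → ℝ => (y 7 : ℝ) ^ (-(1 + p)))
        ((-(1 + p) * x 7 ^ (-(1 + p) - 1)) •
          (ContinuousLinearMap.proj (7 : Fin 9) : (Fin 9 → ℝ) →L[ℝ] ℝ)) x :=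
      (hasJ2 x).rpow_const (Or.inl h7.ne')
    exact hA.mul hB
  have hs : {y : Fin 9 → ℝ | 0 < y 7} ∈ nhds x := by
    have : IsOpen {y : Fin 9 → ℝ | 0 < y 7} :=
      isOpen_lt continuous_const (continuous_apply 7)
    exact this.mem_nhds h7
  have heq : I₁ p q =ᶠ[nhds x] fun y => J₁ y ^ q * (y 7 : ℝ) ^ (-(1 + p)) := by
    filter_upwards [hs] with y hy
    simp only [I₁, J₂]
    rw [Real.rpow_neg (le_of_lt hy), div_eq_mul_inv]
    rfl
  have hI : HasFDerivAt (I₁ p q) _ x := hg.congr_of_eventuallyEq heq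
  rw [hI.fderiv]
  rw [dJ1, dJ2]
  have hd1 : (D1 x) v = v 3 * x 6 + x 3 * v 6 - (v 4 * x 5 + x 4 * v 5) := by
    simp [D1, ContinuousLinearMap.proj_apply]; ring
  simp only [ContinuousLinearMap.add_apply, ContinuousLinearMap.smul_apply,
    ContinuousLinearMap.proj_apply, smul_eq_mul, hd1]
  ring

lemma Xhat_comb (Cc : Fin 9 → Fin 9 → Fin 9 → ℝ) (i : Fin 9) (x : Fin 9 → ℝ)
    (F G H : (Fin 9 → ℝ) → ℝ) (A B : ℝ)
    (h : ∀ v, fderiv ℝ F x v = A * fderiv ℝ G x v + B * fderiv ℝ H x v) :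
    Xhat Cc i F x = A * Xhat Cc i G x + B * Xhat Cc i H x := by
  simp only [Xhat, h, Finset.mul_sum]
  rw [← Finset.sum_add_distrib]
  exact Finset.sum_congr rfl fun j _ => by ring


set_option maxHeartbeats 1000000 in
lemma key0 (p q : ℝ) (x : Fin 9 → ℝ) :
    Xhat (C p q) 0 J₁ x = 0 ∧ Xhat (C p q) 0 J₂ x = 0 := by
  refine ⟨?_, ?_⟩ <;>
    simp only [Xhat, dJ1, dJ2, sum9] <;>
    simp [C, Lhalf, Pi.single_apply, J₁, J₂, Prod.ext_iff] <;>
    try ring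

set_option maxHeartbeats 1000000 in
lemma key1 (p q : ℝ) (x : Fin 9 → ℝ) :
    Xhat (C p q) 1 J₁ x = 0 ∧ Xhat (C p q) 1 J₂ x = 0 := by
  refine ⟨?_, ?_⟩ <;>
    simp only [Xhat, dJ1, dJ2, sum9] <;>
    simp [C, Lhalf, Pi.single_apply, J₁, J₂, Prod.ext_iff] <;>
    try ring

set_option maxHeartbeats 1000000 in
lemma key2 (p q : ℝ) (x : Fin 9 → ℝ) :
    Xhat (C p q) 2 J₁ x = 0 ∧ Xhat (C p q) 2 J₂ x = 0 := by
  refine ⟨?_, ?_⟩ <;>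
    simp only [Xhat, dJ1, dJ2, sum9] <;>
    simp [C, Lhalf, Pi.single_apply, J₁, J₂, Prod.ext_iff] <;>
    try ring

set_option maxHeartbeats 1000000 in
lemma key3 (p q : ℝ) (x : Fin 9 → ℝ) :
    Xhat (C p q) 3 J₁ x = 0 ∧ Xhat (C p q) 3 J₂ x = 0 := by
  refine ⟨?_, ?_⟩ <;>
    simp only [Xhat, dJ1, dJ2, sum9] <;>
    simp [C, Lhalf, Pi.single_apply, J₁, J₂, Prod.ext_iff] <;>
    try ring

set_option maxHeartbeats 1000000 in
lemma key4 (p q : ℝ) (x : Fin 9 → ℝ) :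
    Xhat (C p q) 4 J₁ x = 0 ∧ Xhat (C p q) 4 J₂ x = 0 := by
  refine ⟨?_, ?_⟩ <;>
    simp only [Xhat, dJ1, dJ2, sum9] <;>
    simp [C, Lhalf, Pi.single_apply, J₁, J₂, Prod.ext_iff] <;>
    try ring

set_option maxHeartbeats 1000000 in
lemma key5 (p q : ℝ) (x : Fin 9 → ℝ) :
    Xhat (C p q) 5 J₁ x = 0 ∧ Xhat (C p q) 5 J₂ x = 0 := by
  refine ⟨?_, ?_⟩ <;>
    simp only [Xhat, dJ1, dJ2, sum9] <;>
    simp [C, Lhalf, Pi.single_apply, J₁, J₂, Prod.ext_iff] <;>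
    try ring

set_option maxHeartbeats 1000000 in
lemma key6 (p q : ℝ) (x : Fin 9 → ℝ) :
    Xhat (C p q) 6 J₁ x = 0 ∧ Xhat (C p q) 6 J₂ x = 0 := by
  refine ⟨?_, ?_⟩ <;>
    simp only [Xhat, dJ1, dJ2, sum9] <;>
    simp [C, Lhalf, Pi.single_apply, J₁, J₂, Prod.ext_iff] <;>
    try ring

set_option maxHeartbeats 1000000 in
lemma key7 (p q : ℝ) (x : Fin 9 → ℝ) :
    Xhat (C p q) 7 J₁ x = 0 ∧ Xhat (C p q) 7 J₂ x = 0 := by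
  refine ⟨?_, ?_⟩ <;>
    simp only [Xhat, dJ1, dJ2, sum9] <;>
    simp [C, Lhalf, Pi.single_apply, J₁, J₂, Prod.ext_iff] <;>
    try ring

set_option maxHeartbeats 1000000 in
lemma key8 (p q : ℝ) (x : Fin 9 → ℝ) :
    Xhat (C p q) 8 J₁ x = -(1 + p) * J₁ x ∧ Xhat (C p q) 8 J₂ x = -q * J₂ x := by
  refine ⟨?_, ?_⟩ <;>
    simp only [Xhat, dJ1, dJ2, sum9] <;>
    simp [C, Lhalf, Pi.single_apply, J₁, J₂, Prod.ext_iff] <;>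
    try ring

end Aux

set_option maxHeartbeats 1000000 in
theorem invariants_L9_43 (p q : ℝ) (hq : q ≠ 0) (hp : |p| ≤ 1) :
    (∀ i : Fin 9, i.val < 8 → ∀ x : Fin 9 → ℝ,
        Xhat (C p q) i J₁ x = 0 ∧ Xhat (C p q) i J₂ x = 0) ∧
    (∀ x : Fin 9 → ℝ,
        Xhat (C p q) 8 J₁ x = -(1 + p) * J₁ x ∧ Xhat (C p q) 8 J₂ x = -q * J₂ x) ∧
    (∀ (i : Fin 9) (x : Fin 9 → ℝ), 0 < x 7 → 0 < J₁ x →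
        Xhat (C p q) i (I₁ p q) x = 0) := by

  have key1 : ∀ i : Fin 9, i.val < 8 → ∀ x : Fin 9 → ℝ,
      Xhat (C p q) i J₁ x = 0 ∧ Xhat (C p q) i J₂ x = 0 := by
    intro i hi x
    fin_cases i
    · exact key0 p q x
    · exact key1 p q x
    · exact key2 p q x
    · exact key3 p q x
    · exact key4 p q x
    · exact key5 p q x
    · exact key6 p q x
    · exact key7 p q x
    · norm_num at hi
  have key2 : ∀ x : Fin 9 → ℝ,
      Xhat (C p q) 8 J₁ x = -(1 + p) * J₁ x ∧ Xhat (C p q) 8 J₂ x = -q * J₂ x := by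
    intro x
    exact key8 p q x
  refine ⟨key1, key2, ?_⟩
  intro i x h7 h1
  have hcomb := Xhat_comb (C p q) i x (I₁ p q) J₁ J₂
    (x 7 ^ (-(1 + p)) * (q * J₁ x ^ (q - 1)))
    (J₁ x ^ q * (-(1 + p) * x 7 ^ (-(1 + p) - 1)))
    (dI1 p q x h7 h1)
  rw [hcomb]
  by_cases hi : i.val < 8
  · rw [(key1 i hi x).1, (key1 i hi x).2]; ring
  · have : i = 8 := by omega
    subst this
    rw [(key2 x).1, (key2 x).2]
    have e1 : J₁ x ^ (q - 1) * J₁ x = J₁ x ^ q := by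
      rw [← Real.rpow_add_one h1.ne' (q - 1)]; ring_nf
    have e2 : (x 7 : ℝ) ^ (-(1 + p) - 1) * x 7 = x 7 ^ (-(1 + p)) := by
      rw [← Real.rpow_add_one h7.ne' (-(1 + p) - 1)]; ring_nf
    have hJ2 : J₂ x = x 7 := rfl
    rw [hJ2]
    calc x 7 ^ (-(1 + p)) * (q * J₁ x ^ (q - 1)) * (-(1 + p) * J₁ x)
          + J₁ x ^ q * (-(1 + p) * x 7 ^ (-(1 + p) - 1)) * (-q * x 7)
        = -(q * (1 + p)) * (x 7 ^ (-(1 + p)) * (J₁ x ^ (q - 1) * J₁ x))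
          + (q * (1 + p)) * (J₁ x ^ q * (x 7 ^ (-(1 + p) - 1) * x 7)) := by ring
      _ = 0 := by rw [e1, e2]; ring
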